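/- Let T be a t-norm that is general pseudo-homogeneous for F. Then T=min (i.e., T(x,y)=min{x,y} for all x,y) if and only if F(x,y)=xy for all x,y∈[0,1]. -/

import Mathlib

open Set Filter Topology

def IsTnorm (T : ℝ → ℝ → ℝ) : Prop :=
  (∀ x ∈ Set.Icc (0:ℝ) 1, ∀ y ∈ Set.Icc (0:ℝ) 1, T x y ∈ Set.Icc (0:ℝ) 1) ∧
  (∀ x ∈ Set.Icc (0:ℝ) 1, ∀ y ∈ Set.Icc (0:ℝ) 1, T x y = T y x) ∧
  (∀ x ∈ Set.Icc (0:ℝ) 1, ∀ y ∈ Set.Icc (0:ℝ) 1, ∀ z ∈ Set.Icc (0:ℝ) 1,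
      T x (T y z) = T (T x y) z) ∧
  (∀ x ∈ Set.Icc (0:ℝ) 1, ∀ y ∈ Set.Icc (0:ℝ) 1, ∀ z ∈ Set.Icc (0:ℝ) 1,
      y ≤ z → T x y ≤ T x z) ∧
  (∀ x ∈ Set.Icc (0:ℝ) 1, T x 1 = x)

def IsGPH (T F : ℝ → ℝ → ℝ) : Prop :=
  ∀ lam ∈ Set.Icc (0:ℝ) 1, ∀ x ∈ Set.Icc (0:ℝ) 1, ∀ y ∈ Set.Icc (0:ℝ) 1,
    T (lam * x) (lam * y) = F lam (T x y)

noncomputable def TD : ℝ → ℝ → ℝ := fun x y => if max x y = 1 then min x y else 0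

/-! Specialising the pseudo-homogeneity identity at `x = 1` gives `F λ y = T λ (λ y)`.
If `T = min` this is `min λ (λ y) = λ y`; conversely, if `F` is the product then `y = 1`
gives `T λ λ = λ`, and an idempotent t-norm is `min`. -/

namespace IsTnorm

variable {T : ℝ → ℝ → ℝ} (hT : IsTnorm T) {x y : ℝ}
include hT

theorem one_left (hy : y ∈ Icc (0:ℝ) 1) : T 1 y = y := by
  rw [hT.2.1 1 (right_mem_Icc.2 zero_le_one) y hy, hT.2.2.2.2 y hy]

theorem mono_left {z : ℝ} (hx : x ∈ Icc (0:ℝ) 1) (hy : y ∈ Icc (0:ℝ) 1)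
    (hz : z ∈ Icc (0:ℝ) 1) (hxz : x ≤ z) : T x y ≤ T z y := by
  rw [hT.2.1 x hx y hy, hT.2.1 z hz y hy]
  exact hT.2.2.2.1 y hy x hx z hz hxz

theorem le_left (hx : x ∈ Icc (0:ℝ) 1) (hy : y ∈ Icc (0:ℝ) 1) : T x y ≤ x := by
  simpa only [hT.2.2.2.2 x hx] using
    hT.2.2.2.1 x hx y hy 1 (right_mem_Icc.2 zero_le_one) hy.2

theorem le_right (hx : x ∈ Icc (0:ℝ) 1) (hy : y ∈ Icc (0:ℝ) 1) : T x y ≤ y := by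
  simpa only [hT.one_left hy] using
    hT.mono_left hx hy (right_mem_Icc.2 zero_le_one) hx.2

theorem eq_min_of_idempotent (hidem : ∀ a ∈ Icc (0:ℝ) 1, T a a = a)
    (hx : x ∈ Icc (0:ℝ) 1) (hy : y ∈ Icc (0:ℝ) 1) : T x y = min x y := by
  have hm : min x y ∈ Icc (0:ℝ) 1 := ⟨le_min hx.1 hy.1, min_le_of_left_le hx.2⟩
  refine le_antisymm (le_min (hT.le_left hx hy) (hT.le_right hx hy)) ?_
  calc min x y = T (min x y) (min x y) := (hidem _ hm).symm
    _ ≤ T (min x y) y := hT.2.2.2.1 _ hm _ hm y hy (min_le_right x y)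
    _ ≤ T x y := hT.mono_left hm hy hx (min_le_left x y)

end IsTnorm

theorem IsGPH.apply_eq {T F : ℝ → ℝ → ℝ} (hT : IsTnorm T) (h : IsGPH T F) {lam y : ℝ}
    (hlam : lam ∈ Icc (0:ℝ) 1) (hy : y ∈ Icc (0:ℝ) 1) : F lam y = T lam (lam * y) := by
  have := h lam hlam 1 (right_mem_Icc.2 zero_le_one) y hy
  rwa [mul_one, hT.one_left hy, eq_comm] at this

theorem min_iff_F_prod (T F : ℝ → ℝ → ℝ) (hT : IsTnorm T) (h : IsGPH T F) :
    (∀ x ∈ Set.Icc (0:ℝ) 1, ∀ y ∈ Set.Icc (0:ℝ) 1, T x y = min x y) ↔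
    (∀ x ∈ Set.Icc (0:ℝ) 1, ∀ y ∈ Set.Icc (0:ℝ) 1, F x y = x * y) := by
  constructor
  · intro hmin x hx y hy
    have hxy : x * y ∈ Icc (0:ℝ) 1 := ⟨mul_nonneg hx.1 hy.1, mul_le_one₀ hx.2 hy.1 hy.2⟩
    rw [h.apply_eq hT hx hy, hmin x hx _ hxy]
    exact min_eq_right (mul_le_of_le_one_right hx.1 hy.2)
  · intro hprod
    refine fun x hx y hy => hT.eq_min_of_idempotent (fun a ha => ?_) hx hy
    have h1 : (1:ℝ) ∈ Icc (0:ℝ) 1 := right_mem_Icc.2 zero_le_one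
    simpa only [mul_one, hprod a ha 1 h1] using (h.apply_eq hT ha h1).symm
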